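/- arXiv:2005.06682 — 5 statements merged into one kernel-verified Lean document; each statement's English description precedes it below -/
import Mathlib

section
/- The solution of the algebraic path problem is idempotent: for every R-matrix M on a set X, F(F(M)) = F(M), where F(M) = ⨆_{n≥0} Mⁿ. (This is the content of the statement that the adjunction F ⊣ U between R-matrices and R-categories is idempotent.) -/
open IsQuantale

section Defs

variable {R : Type*} [CompleteLattice R] [CommMonoid R]

/-- The matrix product of two `R`-matrices: `(M N)(i,k) = ⨆ j, M i j * N j k`. -/
def matMul {X : Type*} (M N : X → X → R) : X → X → R :=
  fun i k => ⨆ j, M i j * N j k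

/-- The identity `R`-matrix `1_X`: `1` on the diagonal and `⊥` off the diagonal. -/
def matId (X : Type*) : X → X → R :=
  fun i j => ⨆ _ : i = j, (1 : R)

/-- The `n`-fold matrix power, with `M⁰ = 1_X`. -/
def matPow {X : Type*} (M : X → X → R) : ℕ → X → X → R
  | 0 => matId X
  | n + 1 => matMul M (matPow M n)

/-- The solution of the algebraic path problem: `F(M) = ⨆ n, Mⁿ`. -/
def pathF {X : Type*} (M : X → X → R) : X → X → R :=
  fun i j => ⨆ n, matPow M n i j

/-- An `R`-category on `X` is an `R`-matrix `C` with `1_X ≤ C` and `C·C ≤ C`. -/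
def IsRCat {X : Type*} (C : X → X → R) : Prop :=
  matId X ≤ C ∧ matMul C C ≤ C

/-- The pushforward of an `R`-matrix along a function. -/
def pushforward {X Y : Type*} (f : X → Y) (M : X → X → R) : Y → Y → R :=
  fun y y' => ⨆ p : {q : X × X // f q.1 = y ∧ f q.2 = y'}, M p.1.1 p.1.2

/-- The block sum `M ⊕ N` of two `R`-matrices on the disjoint union. -/
def blockSum {X Y : Type*} (M : X → X → R) (N : Y → Y → R) : (X ⊕ Y) → (X ⊕ Y) → R
  | Sum.inl x, Sum.inl x' => M x x'
  | Sum.inr y, Sum.inr y' => N y y'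
  | _, _ => ⊥

/-- A vertex `v` is a source of `M` if `M c v = ⊥` for all `c`. -/
def IsSource {X : Type*} (M : X → X → R) (v : X) : Prop := ∀ c, M c v = ⊥

/-- A vertex `v` is a sink of `M` if `M v c = ⊥` for all `c`. -/
def IsSink {X : Type*} (M : X → X → R) (v : X) : Prop := ∀ c, M v c = ⊥

end Defs

/-- The relation generating the pushout of sets of `f : Z → X` and `g : Z → Y`. -/
def pushoutRel {Z X Y : Type*} (f : Z → X) (g : Z → Y) : (X ⊕ Y) → (X ⊕ Y) → Prop :=
  fun p q => ∃ z, p = Sum.inl (f z) ∧ q = Sum.inr (g z)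

/-- The pushout of sets `X +_Z Y`: the quotient of the disjoint union `X ⊕ Y`
by the equivalence relation generated by `f z ∼ g z`. -/
def SetPushout {Z X Y : Type*} (f : Z → X) (g : Z → Y) : Type _ :=
  Quot (pushoutRel f g)

/-- The first injection `X → X +_Z Y` into the pushout of sets. -/
def poInl {Z X Y : Type*} (f : Z → X) (g : Z → Y) : X → SetPushout f g :=
  fun x => Quot.mk _ (Sum.inl x)

/-- The second injection `Y → X +_Z Y` into the pushout of sets. -/
def poInr {Z X Y : Type*} (f : Z → X) (g : Z → Y) : Y → SetPushout f g :=
  fun y => Quot.mk _ (Sum.inr y)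

/-! `F(M)` is an `R`-category because `Mᵐ Mⁿ = Mᵐ⁺ⁿ`, and `F` fixes every `R`-category `C`,
since `1_X ≤ C` and `C C ≤ C` give `Cⁿ ≤ C` while `C = C¹ ≤ F(C)`. -/

section RMatrix

variable {R : Type*} [CompleteLattice R] [CommMonoid R] {X : Type*}

theorem matMul_le_iff {M N P : X → X → R} :
    matMul M N ≤ P ↔ ∀ i j k, M i j * N j k ≤ P i k := by
  simp only [Pi.le_def, matMul, iSup_le_iff]
  exact ⟨fun h i j k => h i k j, fun h i k j => h i j k⟩

theorem matPow_le_pathF (M : X → X → R) (n : ℕ) : matPow M n ≤ pathF M :=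
  fun i j => le_iSup (fun n => matPow M n i j) n

variable [IsQuantale R]

theorem matMul_assoc (L M N : X → X → R) :
    matMul (matMul L M) N = matMul L (matMul M N) := by
  ext i l
  simp only [matMul, Quantale.iSup_mul_distrib, Quantale.mul_iSup_distrib, mul_assoc]
  exact iSup_comm

theorem matId_matMul (M : X → X → R) : matMul (matId X) M = M := by
  classical
  ext i k
  simp only [matMul, matId, iSup_eq_if, ite_mul, one_mul, Quantale.bot_mul]
  simp only [← iSup_eq_if, iSup_iSup_eq_right]

theorem matMul_matId (M : X → X → R) : matMul M (matId X) = M := by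
  classical
  ext i k
  simp only [matMul, matId, iSup_eq_if, mul_ite, mul_one, Quantale.mul_bot]
  simp only [← iSup_eq_if, iSup_iSup_eq_left]

theorem matPow_add (M : X → X → R) (m n : ℕ) :
    matPow M (m + n) = matMul (matPow M m) (matPow M n) := by
  induction m with
  | zero => rw [Nat.zero_add, matPow, matId_matMul]
  | succ m ih => rw [Nat.succ_add, matPow, matPow, ih, matMul_assoc]

theorem matPow_one (M : X → X → R) : matPow M 1 = M :=
  matMul_matId M

theorem isRCat_pathF (M : X → X → R) : IsRCat (pathF M) := by
  refine ⟨matPow_le_pathF M 0, matMul_le_iff.2 fun i j k => ?_⟩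
  simp only [pathF, Quantale.iSup_mul_distrib, Quantale.mul_iSup_distrib, iSup_le_iff]
  intro n m
  calc matPow M m i j * matPow M n j k
      ≤ matMul (matPow M m) (matPow M n) i k := matMul_le_iff.1 le_rfl i j k
    _ = matPow M (m + n) i k := by rw [matPow_add]
    _ ≤ pathF M i k := matPow_le_pathF M (m + n) i k

theorem matPow_le_of_isRCat {C : X → X → R} (hC : IsRCat C) (n : ℕ) : matPow C n ≤ C := by
  induction n with
  | zero => exact hC.1
  | succ n ih =>
    refine matMul_le_iff.2 fun i j k => ?_
    calc C i j * matPow C n j k ≤ C i j * C j k := mul_le_mul_right (ih j k) _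
      _ ≤ C i k := matMul_le_iff.1 hC.2 i j k

theorem pathF_eq_of_isRCat {C : X → X → R} (hC : IsRCat C) : pathF C = C :=
  le_antisymm (fun i j => iSup_le fun n => matPow_le_of_isRCat hC n i j)
    ((matPow_one C).ge.trans (matPow_le_pathF C 1))

end RMatrix

/-- The solution of the algebraic path problem is idempotent:
`F(F(M)) = F(M)` for every `R`-matrix `M` on `X`. -/
theorem pathF_idempotent {R : Type*} [CompleteLattice R] [CommMonoid R] [IsQuantale R]
    {X : Type*} (M : X → X → R) :
    pathF (pathF M) = pathF M :=
  pathF_eq_of_isRCat (isRCat_pathF M)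
end

section
/- The algebraic path problem functor is lax natural with respect to pushforward: for every function f : X → Y and every R-matrix M on X, f_*(F(M)) ≤ F(f_*(M)), where F(M) = ⨆_{n≥0} Mⁿ. -/
open IsQuantale

/-- The algebraic path problem is lax natural with respect to pushforward:
`f_*(F(M)) ≤ F(f_*(M))` for every function `f : X → Y` and `R`-matrix `M` on `X`. -/
theorem pushforward_pathF_le {R : Type*} [CompleteLattice R] [CommMonoid R] [IsQuantale R]
    {X Y : Type*} (f : X → Y) (M : X → X → R) :
    pushforward f (pathF M) ≤ pathF (pushforward f M) := by
  have key : ∀ n, pushforward f (matPow M n) ≤ matPow (pushforward f M) n := by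
    intro n
    induction n with
    | zero =>
      intro y y'
      refine iSup_le fun ⟨⟨x, x'⟩, hx, hx'⟩ => ?_
      simp only [matPow, matId]
      refine iSup_le fun h => ?_
      subst h
      exact le_iSup_of_le (hx ▸ hx') le_rfl
    | succ n ih =>
      intro y y'
      refine iSup_le fun ⟨⟨x, x'⟩, hx, hx'⟩ => ?_
      simp only [matPow, matMul]
      refine iSup_le fun j => ?_
      refine le_iSup_of_le (f j) (mul_le_mul' ?_ ?_)
      · exact le_iSup_of_le ⟨(x, j), hx, rfl⟩ le_rfl
      · exact le_trans (le_iSup_of_le ⟨(j, x'), rfl, hx'⟩ le_rfl) (ih (f j) y')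
  intro y y'
  refine iSup_le fun ⟨⟨x, x'⟩, hx, hx'⟩ => ?_
  simp only [pathF]
  refine iSup_le fun n => ?_
  refine le_iSup_of_le n ?_
  exact le_trans (le_iSup_of_le ⟨(x, x'), hx, hx'⟩ le_rfl) (key n y y')
end

section
/- The algebraic path problem gives an adjunction between the category of R-matrices and the category of R-categories (where a morphism from M on X to N on Y is a function f : X → Y with f_*(M) ≤ N): for every R-matrix M on X, every R-category C on Y, and every function f : X → Y, one has f_*(M) ≤ C if and only if f_*(F(M)) ≤ C, where F(M) = ⨆_{n≥0} Mⁿ. -/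
open IsQuantale

private lemma pushforward_le_iff {R : Type*} [CompleteLattice R] {X Y : Type*}
    (f : X → Y) (M : X → X → R) (C : Y → Y → R) :
    pushforward f M ≤ C ↔ ∀ x x', M x x' ≤ C (f x) (f x') := by
  constructor
  · intro h x x'
    exact le_trans (le_iSup (fun p : {q : X × X // f q.1 = f x ∧ f q.2 = f x'} => M p.1.1 p.1.2)
      ⟨(x, x'), rfl, rfl⟩) (h (f x) (f x'))
  · intro h y y'
    apply iSup_le
    rintro ⟨⟨x, x'⟩, hx, hx'⟩
    subst hx; subst hx'
    exact h x x'

/-- The algebraic path problem gives an adjunction between the category of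
`R`-matrices and the category of `R`-categories: for every `R`-matrix `M` on `X`, every
`R`-category `C` on `Y`, and every function `f : X → Y`,
`f_*(M) ≤ C ↔ f_*(F(M)) ≤ C`. -/
theorem pathF_global_adjunction {R : Type*} [CompleteLattice R] [CommMonoid R]
    [IsQuantale R] {X Y : Type*} (M : X → X → R) (C : Y → Y → R) (hC : IsRCat C)
    (f : X → Y) :
    pushforward f M ≤ C ↔ pushforward f (pathF M) ≤ C := by
  rw [pushforward_le_iff, pushforward_le_iff]
  constructor
  · intro h x x'
    apply iSup_le
    intro n
    induction n generalizing x x' with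
    | zero =>
      apply iSup_le
      rintro rfl
      exact le_trans (le_iSup (fun _ : f x = f x => (1 : R)) rfl) (hC.1 (f x) (f x))
    | succ n ih =>
      refine le_trans ?_ (hC.2 (f x) (f x'))
      apply iSup_le
      intro j
      exact le_trans (mul_le_mul' (h x j) (ih j x'))
        (le_iSup (fun k => C (f x) k * C k (f x')) (f j))
  · intro h x x'
    refine le_trans ?_ (h x x')
    refine le_trans ?_ (le_iSup (fun n => matPow M n x x') 1)
    show M x x' ≤ ⨆ j, M x j * matId X j x'
    refine le_trans ?_ (le_iSup _ x')
    calc M x x' = M x x' * 1 := (mul_one _).symm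
      _ ≤ M x x' * matId X x' x' := by
          gcongr
          exact le_iSup (fun _ : x' = x' => (1 : R)) rfl
end

section
/- Blackboxing is a lax double functor: its composition comparison is the inequality ■(M)·■(N) ≤ ■(M ∘ N). Explicitly, let M be an R-category on A with legs i : X → A, j : Y → A, let N be an R-category on B with legs i' : Y → B, j' : Z → B, and let P be any set with functions a : A → P and b : B → P such that a∘j = b∘i'. Then for all x ∈ X and z ∈ Z, ⨆_{y∈Y} M(i(x), j(y)) · N(i'(y), j'(z)) ≤ F( a_*(M) ⊔ b_*(N) )( a(i(x)), b(j'(z)) ), where F(S) = ⨆_{n≥0} Sⁿ. -/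
open IsQuantale

/-- Blackboxing is a lax double functor; its composition comparison is
`■(M)·■(N) ≤ ■(M ∘ N)`: for `R`-categories `M` on `A` (legs `i : X → A`, `j : Y → A`)
and `N` on `B` (legs `i' : Y → B`, `j' : Z → B`), and functions `a : A → P`, `b : B → P`
with `a ∘ j = b ∘ i'`, for all `x, z`:
`⨆ y, M(i x, j y) · N(i' y, j' z) ≤ F(a_*(M) ⊔ b_*(N))(a (i x), b (j' z))`. -/
theorem blackbox_lax {R : Type*} [CompleteLattice R] [CommMonoid R] [IsQuantale R]
    {A B P X Y Z : Type*}
    (M : A → A → R) (hM : IsRCat M) (i : X → A) (j : Y → A)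
    (N : B → B → R) (hN : IsRCat N) (i' : Y → B) (j' : Z → B)
    (a : A → P) (b : B → P) (hc : a ∘ j = b ∘ i') :
    ∀ (x : X) (z : Z),
      (⨆ y : Y, M (i x) (j y) * N (i' y) (j' z)) ≤
        pathF (pushforward a M ⊔ pushforward b N) (a (i x)) (b (j' z)) := by
  intro x z
  refine iSup_le fun y => ?_
  set S : P → P → R := pushforward a M ⊔ pushforward b N with hS
  have hjy : a (j y) = b (i' y) := congrFun hc y
  have h1 : M (i x) (j y) ≤ S (a (i x)) (a (j y)) := by
    refine le_trans ?_ (le_sup_left (b := pushforward b N) (a (i x)) (a (j y)))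
    exact le_iSup_of_le ⟨(i x, j y), rfl, rfl⟩ le_rfl
  have h2 : N (i' y) (j' z) ≤ S (b (i' y)) (b (j' z)) := by
    refine le_trans ?_ (le_sup_right (a := pushforward a M) (b (i' y)) (b (j' z)))
    exact le_iSup_of_le ⟨(i' y, j' z), rfl, rfl⟩ le_rfl
  have hstep : M (i x) (j y) * N (i' y) (j' z) ≤
      S (a (i x)) (a (j y)) * S (b (i' y)) (b (j' z)) := mul_le_mul' h1 h2
  refine le_trans hstep ?_
  rw [hjy]
  refine le_trans ?_ (le_iSup (fun n => matPow S n (a (i x)) (b (j' z))) 2)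
  show S (a (i x)) (b (i' y)) * S (b (i' y)) (b (j' z)) ≤
      matMul S (matMul S (matId P)) (a (i x)) (b (j' z))
  refine le_trans ?_ (le_iSup _ (b (i' y)))
  refine mul_le_mul' le_rfl ?_
  refine le_trans ?_ (le_iSup _ (b (j' z)))
  have : matId P (b (j' z)) (b (j' z)) = (1 : R) := iSup_pos rfl
  rw [this, mul_one]
end

section
/- (Binomial lemma for functional open R-matrices.) Let M be an R-matrix on A with legs i : X → A and j : Y → A, and N an R-matrix on B with legs i' : Y → B and j' : Z → B, such that every i(x) is a source of M, every j(y) is a sink of M, every i'(y) is a source of N, and every j'(z) is a sink of N, and such that j and i' are injective. Let P = A +_Y B be the pushout of sets of j and i', with injections a : A → P and b : B → P, and let S = a_*(M) ⊔ b_*(N). Then for every n ≥ 0 and all x ∈ X, z ∈ Z: Sⁿ( a(i(x)), b(j'(z)) ) = ⨆_{k+l=n} ⨆_{y∈Y} Mᵏ(i(x), j(y)) · Nˡ(i'(y), j'(z)); that is, ■(Sⁿ) = ⨆_{k+l=n} ■(Mᵏ)·■(Nˡ) as rectangular matrices X × Z → R. -/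
open IsQuantale

/-!
Since `j` and `i'` are injective, the pushout identifies each `j y` with `i' y` and nothing
else. As the glue vertices are sinks of `M` and sources of `N`, the matrix
`S = a_*(M) ⊔ b_*(N)` has no edge from the `B`-part back to the `A`-part, agrees with `M` on `A`
and with `N` on `B`, and its edges from `A` to `B` are `M`-edges into, or `N`-edges out of, a
glue vertex. So `Sⁿ` is `Nⁿ` on `B`, and splitting a path from `A` to `B` after its first step
gives the Pascal recursion of `⨆_{k+l=n} Mᵏ · Nˡ`. The only extra term, an `M`-edge onto a glue
vertex followed by `N`-steps, already occurs among the paths that start with an `M`-step.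
-/

section SetPushout

variable {Y A B : Type*} {j : Y → A} {i' : Y → B}

lemma eqvGen_pushoutRel_iff (hj : Function.Injective j) (hi' : Function.Injective i')
    {p q : A ⊕ B} :
    Relation.EqvGen (pushoutRel j i') p q ↔
      p = q ∨ pushoutRel j i' p q ∨ pushoutRel j i' q p := by
  refine ⟨fun h => ?_, ?_⟩
  · induction h with
    | rel _ _ h => exact .inr (.inl h)
    | refl => exact .inl rfl
    | symm _ _ _ ih => rcases ih with rfl | h | h <;> tauto
    | trans _ _ _ _ _ ih₁ ih₂ =>
      rcases ih₁ with rfl | ⟨y, rfl, rfl⟩ | ⟨y, rfl, rfl⟩ <;>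
        rcases ih₂ with rfl | ⟨y', h, h'⟩ | ⟨y', h, h'⟩ <;>
        simp_all [pushoutRel, hj.eq_iff, hi'.eq_iff]
  · rintro (rfl | h | h)
    · exact .refl _
    · exact .rel _ _ h
    · exact .symm _ _ (.rel _ _ h)

lemma iSup_setPushout {α : Type*} [CompleteLattice α] (F : SetPushout j i' → α) :
    ⨆ p, F p = (⨆ u, F (poInl j i' u)) ⊔ ⨆ v, F (poInr j i' v) :=
  (Quot.mk_surjective.iSup_comp F).symm.trans iSup_sum

variable (hj : Function.Injective j) (hi' : Function.Injective i')
include hj hi'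

lemma poInl_injective : Function.Injective (poInl j i') := fun u u' h => by
  simpa [pushoutRel] using (eqvGen_pushoutRel_iff hj hi').mp (Quot.eq.mp h)

lemma poInr_injective : Function.Injective (poInr j i') := fun v v' h => by
  simpa [pushoutRel] using (eqvGen_pushoutRel_iff hj hi').mp (Quot.eq.mp h)

lemma poInl_eq_poInr_iff {u : A} {v : B} :
    poInl j i' u = poInr j i' v ↔ ∃ y, j y = u ∧ i' y = v := by
  refine Quot.eq.trans ((eqvGen_pushoutRel_iff hj hi').trans ?_)
  simp [pushoutRel, eq_comm]

end SetPushout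

section Pushforward

variable {R X Y : Type*} [CompleteLattice R] {f : X → Y} (M : X → X → R)

lemma pushforward_apply (y y' : Y) :
    pushforward f M y y' = ⨆ (x) (_ : f x = y) (x') (_ : f x' = y'), M x x' := by
  simp only [pushforward, iSup_subtype, iSup_prod, iSup_and]
  exact iSup_congr fun x => iSup_comm

lemma pushforward_eq_bot_iff {y y' : Y} :
    pushforward f M y y' = ⊥ ↔ ∀ x, f x = y → ∀ x', f x' = y' → M x x' = ⊥ := by
  simp [pushforward_apply]

lemma pushforward_apply_of_injective (hf : Function.Injective f) (x x' : X) :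
    pushforward f M (f x) (f x') = M x x' := by
  simp [pushforward_apply, hf.eq_iff]

end Pushforward

def gluedMatrix {R Y A B : Type*} [CompleteLattice R] (j : Y → A) (i' : Y → B)
    (M : A → A → R) (N : B → B → R) : SetPushout j i' → SetPushout j i' → R :=
  pushforward (poInl j i') M ⊔ pushforward (poInr j i') N

section GluedMatrix

variable {R Y A B : Type*} [CompleteLattice R] {j : Y → A} {i' : Y → B}
  (hj : Function.Injective j) (hi' : Function.Injective i') (M : A → A → R) (N : B → B → R)
include hj hi'

lemma gluedMatrix_inl_inl (hNsource : ∀ y, IsSource N (i' y)) (u u' : A) :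
    gluedMatrix j i' M N (poInl j i' u) (poInl j i' u') = M u u' := by
  rw [gluedMatrix, Pi.sup_apply, Pi.sup_apply,
    pushforward_apply_of_injective M (poInl_injective hj hi'),
    (pushforward_eq_bot_iff N).mpr fun v _ v' hv' => ?_, sup_bot_eq]
  obtain ⟨y, -, rfl⟩ := (poInl_eq_poInr_iff hj hi').mp hv'.symm
  exact hNsource y v

lemma gluedMatrix_inr_inr (hMsink : ∀ y, IsSink M (j y)) (v v' : B) :
    gluedMatrix j i' M N (poInr j i' v) (poInr j i' v') = N v v' := by
  rw [gluedMatrix, Pi.sup_apply, Pi.sup_apply,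
    pushforward_apply_of_injective N (poInr_injective hj hi'),
    (pushforward_eq_bot_iff M).mpr fun u hu u' _ => ?_, bot_sup_eq]
  obtain ⟨y, rfl, -⟩ := (poInl_eq_poInr_iff hj hi').mp hu
  exact hMsink y u'

lemma gluedMatrix_inr_inl (hMsink : ∀ y, IsSink M (j y)) (hNsource : ∀ y, IsSource N (i' y))
    (v : B) (u : A) :
    gluedMatrix j i' M N (poInr j i' v) (poInl j i' u) = ⊥ := by
  rw [gluedMatrix, Pi.sup_apply, Pi.sup_apply, sup_eq_bot_iff, pushforward_eq_bot_iff,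
    pushforward_eq_bot_iff]
  constructor
  · intro u₁ hu₁ u₂ _
    obtain ⟨y, rfl, -⟩ := (poInl_eq_poInr_iff hj hi').mp hu₁
    exact hMsink y u₂
  · intro v₁ _ v₂ hv₂
    obtain ⟨y, -, rfl⟩ := (poInl_eq_poInr_iff hj hi').mp hv₂.symm
    exact hNsource y v₁

lemma gluedMatrix_inl_inr (u : A) (w : B) :
    gluedMatrix j i' M N (poInl j i' u) (poInr j i' w) =
      (⨆ (y) (_ : i' y = w), M u (j y)) ⊔ ⨆ (y) (_ : j y = u), N (i' y) w := by
  simp only [gluedMatrix, Pi.sup_apply, pushforward_apply, (poInl_injective hj hi').eq_iff,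
    (poInr_injective hj hi').eq_iff, poInl_eq_poInr_iff hj hi', eq_comm (a := poInr j i' _),
    iSup_exists, iSup_and, iSup_iSup_eq_left]
  congr 1
  · rw [iSup_comm]
    simp only [iSup_iSup_eq_right]
  · rw [iSup_comm]
    exact iSup_congr fun y => iSup_comm.trans (by simp only [iSup_iSup_eq_right])

end GluedMatrix

lemma iSup_antidiagonal_zero {α : Type*} [CompleteLattice α] (f : ℕ → ℕ → α) :
    ⨆ p : {p : ℕ × ℕ // p.1 + p.2 = 0}, f p.1.1 p.1.2 = f 0 0 := by
  refine le_antisymm (iSup_le ?_) (le_iSup_of_le ⟨(0, 0), rfl⟩ le_rfl)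
  rintro ⟨⟨k, l⟩, h⟩
  obtain ⟨rfl, rfl⟩ : k = 0 ∧ l = 0 := by omega
  exact le_rfl

lemma iSup_antidiagonal_succ {α : Type*} [CompleteLattice α] (f : ℕ → ℕ → α) (n : ℕ) :
    ⨆ p : {p : ℕ × ℕ // p.1 + p.2 = n + 1}, f p.1.1 p.1.2 =
      f 0 (n + 1) ⊔ ⨆ p : {p : ℕ × ℕ // p.1 + p.2 = n}, f (p.1.1 + 1) p.1.2 := by
  refine le_antisymm (iSup_le ?_) (sup_le (le_iSup_of_le ⟨(0, n + 1), zero_add _⟩ le_rfl)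
    (iSup_le fun ⟨⟨k, l⟩, h⟩ => le_iSup_of_le ⟨(k + 1, l), by dsimp only at h ⊢; omega⟩ le_rfl))
  rintro ⟨⟨_ | k, l⟩, h⟩
  · obtain rfl : l = n + 1 := by simpa using h
    exact le_sup_left
  · exact le_sup_of_le_right (le_iSup_of_le ⟨(k, l), by dsimp only at h ⊢; omega⟩ le_rfl)

section MatPow

variable {R X : Type*} [CompleteLattice R] [CommMonoid R] (M : X → X → R)

lemma matPow_zero_apply (x x' : X) : matPow M 0 x x' = ⨆ _ : x = x', 1 := rfl

lemma matPow_succ_apply (n : ℕ) (x x' : X) :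
    matPow M (n + 1) x x' = ⨆ x'', M x x'' * matPow M n x'' x' := rfl

end MatPow

section Quantale

variable {R : Type*} [CompleteLattice R] [CommMonoid R] [IsQuantale R]

lemma Quantale.mul_iSup_distrib' {ι : Sort*} (x : R) (f : ι → R) :
    x * ⨆ i, f i = ⨆ i, x * f i := by
  rw [iSup, mul_sSup_distrib, iSup_range]

lemma Quantale.iSup_mul_distrib' {ι : Sort*} (x : R) (f : ι → R) :
    (⨆ i, f i) * x = ⨆ i, f i * x := by
  rw [iSup, sSup_mul_distrib, iSup_range]

section BinomialSum

variable {Y A B : Type*} (M : A → A → R) (N : B → B → R) (j : Y → A) (i' : Y → B)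

def binomialSum (n : ℕ) (u : A) (w : B) : R :=
  ⨆ p : {p : ℕ × ℕ // p.1 + p.2 = n}, ⨆ y, matPow M p.1.1 u (j y) * matPow N p.1.2 (i' y) w

lemma binomialSum_zero (u : A) (w : B) :
    binomialSum M N j i' 0 u w = ⨆ (y) (_ : j y = u) (_ : i' y = w), 1 := by
  simp only [binomialSum,
    iSup_antidiagonal_zero fun k l => ⨆ y, matPow M k u (j y) * matPow N l (i' y) w,
    matPow_zero_apply, Quantale.iSup_mul_distrib', Quantale.mul_iSup_distrib', one_mul,
    eq_comm (a := u)]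
  exact iSup_congr fun y => iSup_comm

lemma binomialSum_succ (n : ℕ) (u : A) (w : B) :
    binomialSum M N j i' (n + 1) u w =
      (⨆ (y) (_ : j y = u), matPow N (n + 1) (i' y) w) ⊔
        ⨆ u', M u u' * binomialSum M N j i' n u' w := by
  rw [binomialSum,
    iSup_antidiagonal_succ fun k l => ⨆ y, matPow M k u (j y) * matPow N l (i' y) w]
  congr 1
  · simp only [matPow_zero_apply, Quantale.iSup_mul_distrib', one_mul, eq_comm (a := u)]
  · simp only [binomialSum, matPow_succ_apply, Quantale.iSup_mul_distrib',
      Quantale.mul_iSup_distrib', mul_assoc]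
    exact (iSup_congr fun p => iSup_comm).trans iSup_comm

end BinomialSum

section GluedMatrix

variable {Y A B : Type*} {j : Y → A} {i' : Y → B}
  (hj : Function.Injective j) (hi' : Function.Injective i') (M : A → A → R) (N : B → B → R)
include hj hi'

lemma iSup_gluedMatrix_inl_inr_mul (T : B → B → R) (u : A) (w : B) :
    ⨆ w', gluedMatrix j i' M N (poInl j i' u) (poInr j i' w') * T w' w =
      (⨆ y, M u (j y) * T (i' y) w) ⊔ ⨆ (y) (_ : j y = u) (w'), N (i' y) w' * T w' w := by
  simp only [gluedMatrix_inl_inr hj hi', Quantale.sup_mul_distrib, iSup_sup_eq,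
    Quantale.iSup_mul_distrib']
  congr 1
  · rw [iSup_comm]
    simp only [iSup_iSup_eq_right]
  · rw [iSup_comm]
    exact iSup_congr fun y => iSup_comm

variable (hMsink : ∀ y, IsSink M (j y)) (hNsource : ∀ y, IsSource N (i' y))
include hMsink hNsource

lemma matPow_gluedMatrix_inr_inr (n : ℕ) (v w : B) :
    matPow (gluedMatrix j i' M N) n (poInr j i' v) (poInr j i' w) = matPow N n v w := by
  induction n generalizing v with
  | zero => simp only [matPow_zero_apply, (poInr_injective hj hi').eq_iff]
  | succ n ih =>
    simp only [matPow_succ_apply, iSup_setPushout, gluedMatrix_inr_inl hj hi' M N hMsink hNsource,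
      gluedMatrix_inr_inr hj hi' M N hMsink, ih, Quantale.bot_mul, iSup_bot, bot_sup_eq]

lemma matPow_gluedMatrix_inl_inr (n : ℕ) (u : A) (w : B) :
    matPow (gluedMatrix j i' M N) n (poInl j i' u) (poInr j i' w) =
      binomialSum M N j i' n u w := by
  induction n generalizing u with
  | zero =>
    simp only [matPow_zero_apply, binomialSum_zero, poInl_eq_poInr_iff hj hi', iSup_exists,
      iSup_and]
  | succ n ih =>
    have hstep : matPow (gluedMatrix j i' M N) (n + 1) (poInl j i' u) (poInr j i' w) =
        (⨆ u', M u u' * binomialSum M N j i' n u' w) ⊔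
          ((⨆ y, M u (j y) * matPow N n (i' y) w) ⊔
            ⨆ (y) (_ : j y = u), matPow N (n + 1) (i' y) w) := by
      simp only [matPow_succ_apply, iSup_setPushout, gluedMatrix_inl_inl hj hi' M N hNsource, ih,
        matPow_gluedMatrix_inr_inr hj hi' M N hMsink hNsource, iSup_gluedMatrix_inl_inr_mul hj hi']
    have habsorb : ⨆ y, M u (j y) * matPow N n (i' y) w ≤
        ⨆ u', M u u' * binomialSum M N j i' n u' w := by
      refine iSup_le fun y => le_iSup_of_le (j y) (mul_le_mul' le_rfl ?_)
      refine le_iSup_of_le ⟨(0, n), zero_add n⟩ (le_iSup_of_le y ?_)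
      exact le_mul_of_one_le_left' (le_iSup_of_le rfl le_rfl)
    rw [hstep, binomialSum_succ, ← sup_assoc, sup_eq_left.mpr habsorb, sup_comm]

end GluedMatrix

end Quantale

theorem binomial_functional_general {R : Type*} [CompleteLattice R] [CommMonoid R] [IsQuantale R]
    {A B X Y Z : Type*}
    (M : A → A → R) (i : X → A) (j : Y → A)
    (N : B → B → R) (i' : Y → B) (j' : Z → B)
    (hMsink : ∀ y : Y, IsSink M (j y))
    (hNsource : ∀ y : Y, IsSource N (i' y))
    (hj : Function.Injective j) (hi' : Function.Injective i') :
    ∀ (n : ℕ) (x : X) (z : Z),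
      matPow (pushforward (poInl j i') M ⊔ pushforward (poInr j i') N) n
          (poInl j i' (i x)) (poInr j i' (j' z)) =
        ⨆ p : {p : ℕ × ℕ // p.1 + p.2 = n}, ⨆ y : Y,
          matPow M p.1.1 (i x) (j y) * matPow N p.1.2 (i' y) (j' z) :=
  fun n x z => matPow_gluedMatrix_inl_inr hj hi' M N hMsink hNsource n (i x) (j' z)

/-- Binomial lemma for functional open `R`-matrices: with `M` on `A`
(legs `i : X → A`, `j : Y → A`), `N` on `B` (legs `i' : Y → B`, `j' : Z → B`), inputs
sources, outputs sinks, `j` and `i'` injective, `P = A +_Y B` the pushout of sets with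
injections `a, b`, and `S = a_*(M) ⊔ b_*(N)`, we have for every `n`:
`Sⁿ(a (i x), b (j' z)) = ⨆_{k+l=n} ⨆ y, Mᵏ(i x, j y) · Nˡ(i' y, j' z)`. -/
theorem binomial_functional {R : Type*} [CompleteLattice R] [CommMonoid R] [IsQuantale R]
    {A B X Y Z : Type*}
    (M : A → A → R) (i : X → A) (j : Y → A)
    (N : B → B → R) (i' : Y → B) (j' : Z → B)
    (hMsource : ∀ x : X, IsSource M (i x)) (hMsink : ∀ y : Y, IsSink M (j y))
    (hNsource : ∀ y : Y, IsSource N (i' y)) (hNsink : ∀ z : Z, IsSink N (j' z))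
    (hj : Function.Injective j) (hi' : Function.Injective i') :
    ∀ (n : ℕ) (x : X) (z : Z),
      matPow (pushforward (poInl j i') M ⊔ pushforward (poInr j i') N) n
          (poInl j i' (i x)) (poInr j i' (j' z)) =
        ⨆ p : {p : ℕ × ℕ // p.1 + p.2 = n}, ⨆ y : Y,
          matPow M p.1.1 (i x) (j y) * matPow N p.1.2 (i' y) (j' z) :=
  binomial_functional_general M i j N i' j' hMsink hNsource hj hi'
end
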